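/- Let a, b ∈ ℂ, ε ∈ {1,−1}, and let u be a twice-differentiable complex-valued function solving the degenerate third Painlevé equation dP3(a,b,ε) on a domain with τ ≠ 0 and u(τ) ≠ 0. Define u₁(τ) := −(iεb/(8u(τ)²))·(τ(−u'(τ) + ib) + (2ai + 1)u(τ)). Then on any subdomain where u₁(τ) ≠ 0, the function u₁ solves the degenerate third Painlevé equation dP3(a − i, b, ε), i.e., the same equation with the parameter a replaced by a − i (equivalently ia₁ = ia + 1) and b, ε unchanged. -/

import Mathlib

set_option maxHeartbeats 1600000


open Complex

/-- The degenerate third Painlevé equation dP3(a,b,ε), stated pointwise at τ: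
`u'' = (u')²/u − u'/τ + (1/τ)(−8εu² + 2ab) + b²/u`. -/
def DP3eq (a b ε : ℂ) (v : ℂ → ℂ) (τ : ℂ) : Prop :=
  deriv (deriv v) τ =
    (deriv v τ) ^ 2 / v τ - deriv v τ / τ
      + (1 / τ) * (-(8 * ε * (v τ) ^ 2) + 2 * a * b) + b ^ 2 / v τ

/-- The Bäcklund transform
`u₁(τ) := −(iεb/(8u²))(τ(−u' + ib) + (2ai + 1)u)`. -/
noncomputable def backlundUp (a b ε : ℂ) (u : ℂ → ℂ) : ℂ → ℂ :=
  fun τ => -(Complex.I * ε * b / (8 * (u τ) ^ 2))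
    * (τ * (-(deriv u τ) + Complex.I * b) + (2 * a * Complex.I + 1) * u τ)

/-- The value of `u''` prescribed by dP3. -/
noncomputable def QD (a b ε : ℂ) (p q t : ℂ) : ℂ :=
  q ^ 2 / p - q / t + (1 / t) * (-(8 * ε * p ^ 2) + 2 * a * b) + b ^ 2 / p

/-- Closed form for the first derivative of the Bäcklund transform. -/
noncomputable def Dfun (a b ε : ℂ) (p q t : ℂ) : ℂ :=
  -(Complex.I * ε * b / 8) *
    (t * (q - Complex.I * b) ^ 2 + 8 * ε * p ^ 3 +
      p * (Complex.I * b - 2 * a * b - (2 * a * Complex.I + 1) * q)) / p ^ 3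

/-- Closed form for the second derivative of the Bäcklund transform. -/
noncomputable def D2fun (a b ε : ℂ) (p q t : ℂ) : ℂ :=
  -(Complex.I * ε * b / 8) *
    ( (q - Complex.I * b) ^ 2 / p ^ 3
      + q * (24 * ε * p ^ 2 + (Complex.I * b - 2 * a * b - (2 * a * Complex.I + 1) * q)) / p ^ 3
      - 3 * q * (t * (q - Complex.I * b) ^ 2 + 8 * ε * p ^ 3 +
          p * (Complex.I * b - 2 * a * b - (2 * a * Complex.I + 1) * q)) / p ^ 4
      + (2 * t * (q - Complex.I * b) - (2 * a * Complex.I + 1) * p) * QD a b ε p q t / p ^ 3 )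

private lemma I2 : Complex.I ^ 2 = -1 := Complex.I_sq
private lemma I3 : Complex.I ^ 3 = -Complex.I := by rw [pow_succ, I2]; ring
private lemma I4 : Complex.I ^ 4 = 1 := by rw [pow_succ, I3]; simp [Complex.I_mul_I]
private lemma I5 : Complex.I ^ 5 = Complex.I := by rw [pow_succ, I4]; ring
private lemma I6 : Complex.I ^ 6 = -1 := by rw [pow_succ, I5, Complex.I_mul_I]
private lemma I7 : Complex.I ^ 7 = -Complex.I := by rw [pow_succ, I6]; ring
private lemma I8 : Complex.I ^ 8 = 1 := by rw [pow_succ, I7]; simp [Complex.I_mul_I]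
private lemma I9 : Complex.I ^ 9 = Complex.I := by rw [pow_succ, I8]; ring
private lemma I10 : Complex.I ^ 10 = -1 := by rw [pow_succ, I9, Complex.I_mul_I]
private lemma I11 : Complex.I ^ 11 = -Complex.I := by rw [pow_succ, I10]; ring
private lemma I12 : Complex.I ^ 12 = 1 := by rw [pow_succ, I11]; simp [Complex.I_mul_I]

/-- If `u` solves dP3(a,b,ε), then its Bäcklund transform `u₁` solves
dP3(a − i, b, ε) wherever it does not vanish. -/
theorem backlund_transformation_forward
    (S : Set ℂ) (hS : IsOpen S) (a b ε : ℂ) (hε : ε = 1 ∨ ε = -1)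
    (u : ℂ → ℂ)
    (hne : ∀ τ ∈ S, τ ≠ 0 ∧ u τ ≠ 0)
    (hu : ∀ τ ∈ S, DifferentiableAt ℂ u τ)
    (hu' : ∀ τ ∈ S, DifferentiableAt ℂ (deriv u) τ)
    (hdp3 : ∀ τ ∈ S, DP3eq a b ε u τ) :
    ∀ τ ∈ S, backlundUp a b ε u τ ≠ 0 →
      DP3eq (a - Complex.I) b ε (backlundUp a b ε u) τ := by
  -- the second derivative of u, as prescribed by the equation
  have hQ : ∀ t ∈ S, HasDerivAt (deriv u) (QD a b ε (u t) (deriv u t) t) t := by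
    intro t ht
    have h := (hu' t ht).hasDerivAt
    rwa [hdp3 t ht] at h
  -- first derivative of the Bäcklund transform
  have hv : ∀ t ∈ S, HasDerivAt (backlundUp a b ε u)
      (Dfun a b ε (u t) (deriv u t) t) t := by
    intro t ht
    obtain ⟨ht0, hp0⟩ := hne t ht
    have hu1 : HasDerivAt u (deriv u t) t := (hu t ht).hasDerivAt
    have hq1 := hQ t ht
    have hden := (hu1.pow 2).const_mul (8 : ℂ)
    have hA := ((hasDerivAt_const t (Complex.I * ε * b)).div hden
      (by simp [hp0])).neg
    have hB := ((hasDerivAt_id t).mul (hq1.neg.add_const (Complex.I * b))).add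
        (hu1.const_mul (2 * a * Complex.I + 1))
    have hC := hA.mul hB
    refine hC.congr_deriv (Eq.symm ?_)
    simp only [Dfun, QD]
    simp only [Pi.mul_apply, Pi.add_apply, Pi.neg_apply, Pi.div_apply, Pi.pow_apply, id]
    have hne1 : (8 : ℂ) * (u t) ^ 2 * (u t * t * t * u t) ≠ 0 :=
      mul_ne_zero (by simp [hp0])
        (mul_ne_zero (mul_ne_zero (mul_ne_zero hp0 ht0) ht0) hp0)
    field_simp [ht0, hp0, hne1]
    ring_nf
    simp only [I2, I3, I4, I5, I6, I7, I8, I9, I10, I11, I12]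
    ring
  -- second derivative of the Bäcklund transform
  intro τ hτ hvne
  obtain ⟨hτ0, hp0⟩ := hne τ hτ
  have hu1 : HasDerivAt u (deriv u τ) τ := (hu τ hτ).hasDerivAt
  have hq1 := hQ τ hτ
  have hw : HasDerivAt (fun t => Dfun a b ε (u t) (deriv u t) t)
      (D2fun a b ε (u τ) (deriv u τ) τ) τ := by
    have hN := (((hasDerivAt_id τ).mul ((hq1.sub_const (Complex.I * b)).pow 2)).add
        ((hu1.pow 3).const_mul (8 * ε))).add
        (hu1.mul (((hq1.const_mul (2 * a * Complex.I + 1)).const_sub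
          (Complex.I * b - 2 * a * b))))
    have hC := (hN.const_mul (-(Complex.I * ε * b / 8))).div (hu1.pow 3)
      (by simp [hp0])
    refine hC.congr_deriv (Eq.symm ?_)
    simp only [D2fun, QD]
    simp only [Pi.mul_apply, Pi.add_apply, Pi.neg_apply, Pi.div_apply, Pi.pow_apply, id]
    have hd1 : u τ * τ * τ * u τ * u τ ^ 3 ≠ 0 :=
      mul_ne_zero (mul_ne_zero (mul_ne_zero (mul_ne_zero hp0 hτ0) hτ0) hp0)
        (pow_ne_zero 3 hp0)
    have hd2 : (8 : ℂ) * (u τ * τ * τ * u τ) ≠ 0 :=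
      mul_ne_zero (by norm_num)
        (mul_ne_zero (mul_ne_zero (mul_ne_zero hp0 hτ0) hτ0) hp0)
    field_simp [hτ0, hp0, hd1, hd2]
    ring_nf
    try simp only [I2, I3, I4, I5, I6, I7, I8, I9, I10, I11, I12]
    try ring
  have e1 : deriv (backlundUp a b ε u) τ = Dfun a b ε (u τ) (deriv u τ) τ :=
    (hv τ hτ).deriv
  have e2 : deriv (deriv (backlundUp a b ε u)) τ = D2fun a b ε (u τ) (deriv u τ) τ := by
    have heq : deriv (backlundUp a b ε u) =ᶠ[nhds τ]
        (fun t => Dfun a b ε (u t) (deriv u t) t) := by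
      filter_upwards [hS.mem_nhds hτ] with t ht using (hv t ht).deriv
    rw [heq.deriv_eq]
    exact hw.deriv
  have hb : b ≠ 0 := by
    intro h; exact hvne (by simp [backlundUp, h])
  have hz : τ * (-(deriv u τ) + Complex.I * b) + (2 * a * Complex.I + 1) * u τ ≠ 0 := by
    intro h; exact hvne (by simp [backlundUp, h])
  have hfinal : D2fun a b ε (u τ) (deriv u τ) τ =
      (Dfun a b ε (u τ) (deriv u τ) τ) ^ 2 / backlundUp a b ε u τ
      - Dfun a b ε (u τ) (deriv u τ) τ / τ
      + (1 / τ) * (-(8 * ε * (backlundUp a b ε u τ) ^ 2) + 2 * (a - Complex.I) * b)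
      + b ^ 2 / backlundUp a b ε u τ := by
    simp only [backlundUp, Dfun, D2fun, QD]
    have h8 : (8 : ℂ) ≠ 0 := by norm_num
    have hd1 : u τ * τ * τ * u τ * u τ ^ 3 ≠ 0 :=
      mul_ne_zero (mul_ne_zero (mul_ne_zero (mul_ne_zero hp0 hτ0) hτ0) hp0)
        (pow_ne_zero 3 hp0)
    have hd2 : (8 : ℂ) * (u τ * τ * τ * u τ) ≠ 0 :=
      mul_ne_zero h8 (mul_ne_zero (mul_ne_zero (mul_ne_zero hp0 hτ0) hτ0) hp0)
    have hd3 : -((8 * u τ ^ 3) ^ 2 *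
        (Complex.I * b * (τ * (-deriv u τ + Complex.I * b) + (2 * a * Complex.I + 1) * u τ)) *
        (8 * u τ ^ 3 * τ)) ≠ 0 :=
      neg_ne_zero.mpr (mul_ne_zero
        (mul_ne_zero (pow_ne_zero 2 (mul_ne_zero h8 (pow_ne_zero 3 hp0)))
          (mul_ne_zero (mul_ne_zero Complex.I_ne_zero hb) hz))
        (mul_ne_zero (mul_ne_zero h8 (pow_ne_zero 3 hp0)) hτ0))
    have hz' : Complex.I * b *
        (τ * (-deriv u τ + Complex.I * b) + (2 * a * Complex.I + 1) * u τ) ≠ 0 :=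
      mul_ne_zero (mul_ne_zero Complex.I_ne_zero hb) hz
    have hA : ((8 : ℂ) * u τ ^ 3) ^ 2 ≠ 0 := pow_ne_zero 2 (mul_ne_zero h8 (pow_ne_zero 3 hp0))
    have hB : (8 : ℂ) * u τ ^ 3 * τ ≠ 0 := mul_ne_zero (mul_ne_zero h8 (pow_ne_zero 3 hp0)) hτ0
    have hC2 : τ * ((8 : ℂ) * u τ ^ 2) ^ 2 ≠ 0 :=
      mul_ne_zero hτ0 (pow_ne_zero 2 (mul_ne_zero h8 (pow_ne_zero 2 hp0)))
    have hd4 : ((8 : ℂ) * u τ ^ 3) ^ 2 *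
        (Complex.I * b * (τ * (-deriv u τ + Complex.I * b) + (2 * a * Complex.I + 1) * u τ)) *
        (8 * u τ ^ 3 * τ) * (τ * (8 * u τ ^ 2) ^ 2) ≠ 0 :=
      mul_ne_zero (mul_ne_zero (mul_ne_zero hA hz') hB) hC2
    have hd5 : ((8 : ℂ) * u τ ^ 3) ^ 2 *
        (Complex.I * b * (τ * (-deriv u τ + Complex.I * b) + (2 * a * Complex.I + 1) * u τ)) *
        (8 * u τ ^ 3 * τ) ≠ 0 :=
      mul_ne_zero (mul_ne_zero hA hz') hB
    rcases hε with rfl | rfl <;>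
    · field_simp [hτ0, hp0, hb, hz, Complex.I_ne_zero, hd1, hd2, hd3, hd4, hd5, (show τ * (-deriv u τ + Complex.I * b) + u τ * (Complex.I * 2 * a + 1) ≠ 0 by rw [show u τ * (Complex.I * 2 * a + 1) = (2 * a * Complex.I + 1) * u τ by ring]; exact hz)]
      ring_nf
      simp only [I2, I3, I4, I5, I6, I7, I8, I9, I10, I11, I12]
      ring
  unfold DP3eq
  rw [e2, e1, hfinal]
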